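/- arXiv:1711.02871 — 5 statements merged into one kernel-verified Lean document; each statement's English description precedes it below -/
import Mathlib

section
/- Let r > 1 be a real number and suppose that the m-th prime p_m is r-mighty. Set u := ∏_{t=m+1}^∞ 1/(1 − p_t^{−r}). Then u < 1 + p_m^{−r}, the open interval (u, 1 + p_m^{−r}) is disjoint from the set σ_{−r}(ℕ⁺) = {σ_{−r}(n) : n ∈ ℕ⁺}, and both u and 1 + p_m^{−r} belong to the topological closure of σ_{−r}(ℕ⁺) in ℝ. -/
open scoped BigOperators

/-- The divisor function `σ_{-r}(n) = ∑_{d ∣ n} d^{-r}`. -/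
noncomputable def sigmaNeg (r : ℝ) (n : ℕ) : ℝ := ∑ d ∈ n.divisors, (d : ℝ) ^ (-r)

/-- The range `σ_{-r}(ℕ⁺) = {σ_{-r}(n) : n ∈ ℕ⁺}`. -/
def sigmaSet (r : ℝ) : Set ℝ := {x | ∃ n : ℕ, 0 < n ∧ x = sigmaNeg r n}

/-- The product `∏_{q prime, q > p} 1/(1 - q^{-r})` over all primes greater than `p`. -/
noncomputable def mightyProd (r : ℝ) (p : ℕ) : ℝ :=
  ∏' q : {q : ℕ // q.Prime ∧ p < q}, (1 - ((q : ℕ) : ℝ) ^ (-r))⁻¹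

/-- A prime `p` is `r`-mighty if `1 + p^{-r} > ∏_{q prime, q > p} 1/(1 - q^{-r})`. -/
def IsMighty (r : ℝ) (p : ℕ) : Prop := 1 + (p : ℝ) ^ (-r) > mightyProd r p

/-!
Every `σ_{-r}(n)` falls on one side of the gap. If some prime `q ≤ p` divides `n`, then `1` and `q`
are divisors and `σ_{-r}(n) ≥ 1 + q^{-r} ≥ 1 + p^{-r}`. Otherwise all prime factors of `n` exceed
`p`, and multiplicativity bounds `σ_{-r}(n)` by the product of the Euler factors `(1 - q^{-r})⁻¹`
over those primes, hence by `u`. Conversely `1 + p^{-r} = σ_{-r}(p)`, and `u` is approximated by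
`σ_{-r}(∏_{q ∈ s} q^k)` as `k → ∞` and the finite set `s` of primes `q > p` grows.
-/

open Filter Topology Finset ArithmeticFunction
open scoped ArithmeticFunction.zeta

noncomputable def rpowArith (s : ℝ) : ArithmeticFunction ℝ :=
  ⟨fun n => if n = 0 then 0 else (n : ℝ) ^ s, if_pos rfl⟩

lemma isMultiplicative_rpowArith (s : ℝ) : (rpowArith s).IsMultiplicative := by
  refine IsMultiplicative.iff_ne_zero.2 ⟨by simp [rpowArith], fun {m n} hm hn _ => ?_⟩
  simp [rpowArith, hm, hn, Real.mul_rpow]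

noncomputable def sigmaNegArith (r : ℝ) : ArithmeticFunction ℝ := ζ * rpowArith (-r)

lemma sigmaNegArith_apply (r : ℝ) (n : ℕ) : sigmaNegArith r n = sigmaNeg r n := by
  rw [sigmaNegArith, coe_zeta_mul_apply, sigmaNeg]
  exact sum_congr rfl fun d hd => if_neg (Nat.pos_of_mem_divisors hd).ne'

lemma isMultiplicative_sigmaNegArith (r : ℝ) : (sigmaNegArith r).IsMultiplicative :=
  isMultiplicative_zeta.natCast.mul (isMultiplicative_rpowArith _)

lemma sigmaNeg_nonneg (r : ℝ) (n : ℕ) : 0 ≤ sigmaNeg r n :=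
  sum_nonneg fun d _ => Real.rpow_nonneg d.cast_nonneg _

lemma sigmaNeg_prime_pow {q : ℕ} (hq : q.Prime) (r : ℝ) (k : ℕ) :
    sigmaNeg r (q ^ k) = ∑ e ∈ range (k + 1), ((q : ℝ) ^ (-r)) ^ e := by
  rw [sigmaNeg, Nat.divisors_prime_pow hq, sum_map]
  refine sum_congr rfl fun e _ => ?_
  simp only [Function.Embedding.coeFn_mk, Nat.cast_pow]
  exact (Real.rpow_pow_comm q.cast_nonneg _ _).symm

lemma sigmaNeg_prime {q : ℕ} (hq : q.Prime) (r : ℝ) : sigmaNeg r q = 1 + (q : ℝ) ^ (-r) := by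
  simpa [sum_range_succ] using sigmaNeg_prime_pow hq r 1

lemma natCast_rpow_neg_lt_one {q : ℕ} (hq : 1 < q) {r : ℝ} (hr : 0 < r) :
    (q : ℝ) ^ (-r) < 1 :=
  Real.rpow_lt_one_of_one_lt_of_neg (by exact_mod_cast hq) (neg_neg_of_pos hr)

lemma sigmaNeg_prime_pow_le {q : ℕ} (hq : q.Prime) {r : ℝ} (hr : 0 < r) (k : ℕ) :
    sigmaNeg r (q ^ k) ≤ (1 - (q : ℝ) ^ (-r))⁻¹ := by
  rw [sigmaNeg_prime_pow hq, range_eq_Ico]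
  simpa using geom_sum_Ico_le_of_lt_one (Real.rpow_nonneg q.cast_nonneg (-r))
    (natCast_rpow_neg_lt_one hq.one_lt hr) (m := 0) (n := k + 1)

lemma tendsto_sigmaNeg_prime_pow {q : ℕ} (hq : q.Prime) {r : ℝ} (hr : 0 < r) :
    Tendsto (fun k => sigmaNeg r (q ^ k)) atTop (𝓝 (1 - (q : ℝ) ^ (-r))⁻¹) := by
  simp_rw [sigmaNeg_prime_pow hq]
  exact (hasSum_geometric_of_lt_one (Real.rpow_nonneg q.cast_nonneg (-r))
    (natCast_rpow_neg_lt_one hq.one_lt hr)).tendsto_sum_nat.comp (tendsto_add_atTop_nat 1)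

lemma one_add_rpow_neg_le_sigmaNeg {q n : ℕ} (hq : 1 < q) (hn : n ≠ 0) (hqn : q ∣ n) (r : ℝ) :
    1 + (q : ℝ) ^ (-r) ≤ sigmaNeg r n := by
  have hsub : ({1, q} : Finset ℕ) ⊆ n.divisors := insert_subset_iff.2
    ⟨Nat.one_mem_divisors.2 hn, singleton_subset_iff.2 (Nat.mem_divisors.2 ⟨hqn, hn⟩)⟩
  calc 1 + (q : ℝ) ^ (-r) = ∑ d ∈ {1, q}, (d : ℝ) ^ (-r) := by simp [sum_pair hq.ne]
    _ ≤ sigmaNeg r n :=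
      sum_le_sum_of_subset_of_nonneg hsub fun d _ _ => Real.rpow_nonneg d.cast_nonneg _

lemma multipliable_inv_one_sub_of_summable {ι : Type*} {f : ι → ℝ} (hf : Summable f)
    (hf1 : ∀ i, f i ≠ 1) : Multipliable fun i => (1 - f i)⁻¹ := by
  have hsum : Summable fun i => ‖-f i‖ := by simpa using hf.abs
  have hne : ∀ i, 1 + -f i ≠ 0 := fun i => by
    rw [← sub_eq_add_neg]; exact sub_ne_zero.2 (hf1 i).symm
  simpa [sub_eq_add_neg] using
    (multipliable_one_add_of_summable hsum).inv₀ (tprod_one_add_ne_zero_of_summable hne hsum)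

lemma multipliable_mightyProd {r : ℝ} (hr : 1 < r) (p : ℕ) :
    Multipliable fun q : {q : ℕ // q.Prime ∧ p < q} => (1 - ((q : ℕ) : ℝ) ^ (-r))⁻¹ :=
  multipliable_inv_one_sub_of_summable
    ((Real.summable_nat_rpow.2 (by linarith)).comp_injective Subtype.val_injective)
    fun q => (natCast_rpow_neg_lt_one q.2.1.one_lt (by linarith)).ne

lemma prod_le_tprod_of_one_le {ι : Type*} {f : ι → ℝ} (hf : ∀ i, 1 ≤ f i) (hm : Multipliable f)
    (s : Finset ι) : ∏ i ∈ s, f i ≤ ∏' i, f i :=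
  ge_of_tendsto hm.hasProd <| eventually_atTop.2 ⟨s, fun _ hst =>
    prod_le_prod_of_subset_of_one_le hst (fun i _ => zero_le_one.trans (hf i)) fun i _ _ => hf i⟩

lemma prod_le_mightyProd {r : ℝ} (hr : 1 < r) {p : ℕ} {s : Finset ℕ}
    (hs : ∀ q ∈ s, q.Prime ∧ p < q) :
    ∏ q ∈ s, (1 - (q : ℝ) ^ (-r))⁻¹ ≤ mightyProd r p := by
  have hfactor : ∀ q : {q : ℕ // q.Prime ∧ p < q}, 1 ≤ (1 - ((q : ℕ) : ℝ) ^ (-r))⁻¹ := fun q =>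
    one_le_inv₀ (sub_pos.2 (natCast_rpow_neg_lt_one q.2.1.one_lt (by linarith))) |>.2 <|
      sub_le_self _ (Real.rpow_nonneg (Nat.cast_nonneg _) _)
  calc ∏ q ∈ s, (1 - (q : ℝ) ^ (-r))⁻¹
      = ∏ q ∈ s.subtype (fun q => q.Prime ∧ p < q), (1 - ((q : ℕ) : ℝ) ^ (-r))⁻¹ := by
        rw [prod_subtype_eq_prod_filter (f := fun q : ℕ => (1 - (q : ℝ) ^ (-r))⁻¹),
          filter_true_of_mem hs]
    _ ≤ mightyProd r p := prod_le_tprod_of_one_le hfactor (multipliable_mightyProd hr p) _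

lemma sigmaNeg_le_mightyProd {r : ℝ} (hr : 1 < r) {p n : ℕ} (hn : n ≠ 0)
    (hp : ∀ q ∈ n.primeFactors, p < q) : sigmaNeg r n ≤ mightyProd r p := by
  rw [← sigmaNegArith_apply, (isMultiplicative_sigmaNegArith r).multiplicative_factorization _ hn,
    Finsupp.prod, Nat.support_factorization]
  refine (prod_le_prod (fun q _ => ?_) fun q hq => ?_).trans
    (prod_le_mightyProd hr fun q hq => ⟨Nat.prime_of_mem_primeFactors hq, hp q hq⟩)
  · rw [sigmaNegArith_apply]; exact sigmaNeg_nonneg _ _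
  · rw [sigmaNegArith_apply]
    exact sigmaNeg_prime_pow_le (Nat.prime_of_mem_primeFactors hq) (by linarith) _

lemma sigmaNeg_le_mightyProd_or_one_add_le {r : ℝ} (hr : 1 < r) {n : ℕ} (hn : n ≠ 0) (p : ℕ) :
    sigmaNeg r n ≤ mightyProd r p ∨ 1 + (p : ℝ) ^ (-r) ≤ sigmaNeg r n := by
  by_cases h : ∀ q ∈ n.primeFactors, p < q
  · exact .inl (sigmaNeg_le_mightyProd hr hn h)
  push Not at h
  obtain ⟨q, hq, hqp⟩ := h
  have hq' := Nat.prime_of_mem_primeFactors hq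
  refine .inr (le_trans ?_ (one_add_rpow_neg_le_sigmaNeg hq'.one_lt hn
    (Nat.dvd_of_mem_primeFactors hq) r))
  gcongr 1 + ?_
  exact Real.rpow_le_rpow_of_nonpos (by exact_mod_cast hq'.pos) (by exact_mod_cast hqp)
    (by linarith)

lemma prod_mem_closure_sigmaSet {r : ℝ} (hr : 0 < r) {s : Finset ℕ} (hs : ∀ q ∈ s, q.Prime) :
    ∏ q ∈ s, (1 - (q : ℝ) ^ (-r))⁻¹ ∈ closure (sigmaSet r) := by
  have hσ : ∀ k, sigmaNeg r (∏ q ∈ s, q ^ k) = ∏ q ∈ s, sigmaNeg r (q ^ k) := fun k => by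
    simp_rw [← sigmaNegArith_apply]
    exact (isMultiplicative_sigmaNegArith r).map_prod _ s fun q hq q' hq' hne =>
      ((Nat.coprime_primes (hs q hq) (hs q' hq')).2 hne).pow k k
  refine mem_closure_of_tendsto
    (tendsto_finsetProd s fun q hq => tendsto_sigmaNeg_prime_pow (hs q hq) hr)
    (Eventually.of_forall fun k => ?_)
  exact ⟨_, prod_pos fun q hq => pow_pos (hs q hq).pos k, (hσ k).symm⟩

lemma mightyProd_mem_closure {r : ℝ} (hr : 1 < r) (p : ℕ) :
    mightyProd r p ∈ closure (sigmaSet r) := by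
  rw [← closure_closure]
  refine mem_closure_of_tendsto (multipliable_mightyProd hr p).hasProd
    (Eventually.of_forall fun s => ?_)
  have := prod_mem_closure_sigmaSet (r := r) (by linarith)
    (s := s.map (Function.Embedding.subtype _)) fun q hq => by
      obtain ⟨q, -, rfl⟩ := mem_map.1 hq
      exact q.2.1
  rwa [prod_map] at this

/-- If the prime `p = p_m` is `r`-mighty and `u = ∏_{t=m+1}^∞ 1/(1 - p_t^{-r})`, then
`u < 1 + p^{-r}`, the open interval `(u, 1 + p^{-r})` is disjoint from `σ_{-r}(ℕ⁺)`, and both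
endpoints lie in the closure of `σ_{-r}(ℕ⁺)`. -/
theorem stmt_0 (r : ℝ) (hr : 1 < r) (p : ℕ) (hp : p.Prime)
    (hmighty : IsMighty r p) (u : ℝ) (hu : u = mightyProd r p) :
    u < 1 + (p : ℝ) ^ (-r) ∧
    Set.Ioo u (1 + (p : ℝ) ^ (-r)) ∩ sigmaSet r = ∅ ∧
    u ∈ closure (sigmaSet r) ∧
    (1 + (p : ℝ) ^ (-r)) ∈ closure (sigmaSet r) := by
  subst hu
  refine ⟨hmighty, ?_, mightyProd_mem_closure hr p,
    subset_closure ⟨p, hp.pos, (sigmaNeg_prime hp r).symm⟩⟩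
  rw [Set.eq_empty_iff_forall_notMem]
  rintro _ ⟨⟨hlo, hhi⟩, n, hn, rfl⟩
  rcases sigmaNeg_le_mightyProd_or_one_add_le hr hn.ne' p with h | h <;> linarith
end

section
/- Let r > 1 be a real number and let Q be a prime with Q < r. Then Q is r-mighty; that is, writing Q = p_m, we have 1 + Q^{−r} > ∏_{t=m+1}^∞ 1/(1 − p_t^{−r}). -/
open scoped BigOperators

/-!
By the Euler product for the completely multiplicative function `n ↦ n^{-r}` restricted to
integers coprime to `Q!`, the product over the primes `q > Q` is `∑ n^{-r}` over the `n` all of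
whose prime factors exceed `Q`. Apart from `n = 1`, these `n` are odd and larger than `Q`. Since
`x ↦ x^{-r}` is convex, `2 (r - 1) n^{-r} ≤ (n - 1)^{1-r} - (n + 1)^{1-r}`, which telescopes
over the odd `n > Q` to the bound `Q^{1-r} / (2 (r - 1))`. This is less than `Q^{-r}` because
`Q < r` and `2 ≤ Q` force `Q < 2 (r - 1)`.
-/

open Real Set
open scoped Nat

lemma two_mul_rpow_le_rpow_sub_add_rpow_add {p x t : ℝ} (hp : p ≤ 0) (ht : t ∈ Ioo (-x) x) :
    2 * x ^ p ≤ (x - t) ^ p + (x + t) ^ p := by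
  obtain ⟨ht₁, ht₂⟩ := ht
  have hm : 0 < x - t := by linarith
  have hpl : 0 < x + t := by linarith
  have hx : 0 < x := by linarith
  set u := (x - t) ^ (p / 2)
  set v := (x + t) ^ (p / 2)
  have hu : (x - t) ^ p = u ^ 2 := by rw [← rpow_natCast, ← rpow_mul hm.le]; ring_nf
  have hv : (x + t) ^ p = v ^ 2 := by rw [← rpow_natCast, ← rpow_mul hpl.le]; ring_nf
  have huv : x ^ p ≤ u * v := calc
    x ^ p = (x ^ 2) ^ (p / 2) := by rw [← rpow_natCast, ← rpow_mul hx.le]; ring_nf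
    _ ≤ ((x - t) * (x + t)) ^ (p / 2) :=
        rpow_le_rpow_of_nonpos (by positivity) (by nlinarith [sq_nonneg t]) (by linarith)
    _ = u * v := mul_rpow hm.le hpl.le
  nlinarith [sq_nonneg (u - v)]

lemma mul_rpow_neg_le_rpow_sub_sub_rpow_add {r x h : ℝ} (hr : 1 ≤ r) (hh : 0 ≤ h)
    (hhx : h < x) :
    2 * h * (r - 1) * x ^ (-r) ≤ (x - h) ^ (1 - r) - (x + h) ^ (1 - r) := by
  set D : ℝ → ℝ := fun t => (x - t) ^ (1 - r) - (x + t) ^ (1 - r)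
  have hderiv : ∀ t ∈ Ioo (-x) x,
      HasDerivAt D ((r - 1) * ((x - t) ^ (-r) + (x + t) ^ (-r))) t := by
    intro t ⟨ht₁, ht₂⟩
    have h₁ := ((hasDerivAt_id' t).const_sub x).rpow_const (p := 1 - r) (Or.inl (by linarith))
    have h₂ := ((hasDerivAt_id' t).const_add x).rpow_const (p := 1 - r) (Or.inl (by linarith))
    refine (h₁.sub h₂).congr_deriv ?_
    rw [show 1 - r - 1 = -r by ring]
    ring
  have hmono := (convex_Ioo (-x) x).mul_sub_le_image_sub_of_le_deriv
    (fun t ht => (hderiv t ht).continuousAt.continuousWithinAt)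
    (fun t ht => (hderiv t (interior_subset ht)).differentiableAt.differentiableWithinAt)
    (C := 2 * (r - 1) * x ^ (-r)) (fun t ht => by
      rw [interior_Ioo] at ht
      rw [(hderiv t ht).deriv, mul_comm 2, mul_assoc]
      exact mul_le_mul_of_nonneg_left
        (two_mul_rpow_le_rpow_sub_add_rpow_add (by linarith) ht) (by linarith))
    0 ⟨by linarith, by linarith⟩ h ⟨by linarith, hhx⟩ hh
  simp only [D, sub_zero, add_zero, sub_self] at hmono
  linarith

lemma tsum_le_of_le_odd_rpow_neg {r : ℝ} (hr : 1 < r) {Q : ℕ} (hQ : 0 < Q) {a : ℕ → ℝ}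
    (ha₀ : ∀ k, 0 ≤ a k)
    (ha : ∀ k, a k ≤ if Q < 2 * k + 3 then ((2 * k + 3 : ℕ) : ℝ) ^ (-r) else 0) :
    ∑' k, a k ≤ (Q : ℝ) ^ (1 - r) / (2 * (r - 1)) := by
  have hQ' : (0 : ℝ) < Q := by exact_mod_cast hQ
  have hc : 0 < 2 * (r - 1) := by linarith
  -- `ψ` telescopes the bound at the midpoint `2k + 3` over the odd integers above `Q`.
  set ψ : ℕ → ℝ := fun k => max (2 * k + 2 : ℝ) Q ^ (1 - r)
  have hψ_anti : Antitone ψ := fun k l hkl =>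
    rpow_le_rpow_of_nonpos (lt_max_of_lt_right hQ')
      (max_le_max_right _ (by gcongr)) (by linarith)
  have hterm : ∀ k, a k ≤ (ψ k - ψ (k + 1)) / (2 * (r - 1)) := by
    intro k
    refine (ha k).trans ?_
    split_ifs with hk
    · have hk' : (Q : ℝ) ≤ 2 * k + 2 := by exact_mod_cast (by omega : Q ≤ 2 * k + 2)
      have hψk : ψ k = (2 * k + 3 - 1 : ℝ) ^ (1 - r) := by
        simp only [ψ, max_eq_left hk']; ring_nf
      have hψk1 : ψ (k + 1) = (2 * k + 3 + 1 : ℝ) ^ (1 - r) := by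
        have hk1 : (Q : ℝ) ≤ 2 * ((k + 1 : ℕ) : ℝ) + 2 := by push_cast; linarith
        simp only [ψ, max_eq_left hk1]
        push_cast; ring_nf
      rw [le_div_iff₀ hc, hψk, hψk1]
      have := mul_rpow_neg_le_rpow_sub_sub_rpow_add (x := 2 * k + 3) hr.le zero_le_one
        (by linarith [k.cast_nonneg (α := ℝ)])
      push_cast
      linarith
    · exact div_nonneg (sub_nonneg.mpr (hψ_anti k.le_succ)) hc.le
  refine Real.tsum_le_of_sum_range_le ha₀ fun N => ?_
  calc ∑ k ∈ Finset.range N, a k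
      ≤ ∑ k ∈ Finset.range N, (ψ k - ψ (k + 1)) / (2 * (r - 1)) :=
        Finset.sum_le_sum fun k _ => hterm k
    _ = (ψ 0 - ψ N) / (2 * (r - 1)) := by rw [← Finset.sum_div, Finset.sum_range_sub']
    _ ≤ (Q : ℝ) ^ (1 - r) / (2 * (r - 1)) := by
        gcongr
        have hψN : 0 ≤ ψ N := rpow_nonneg (le_max_of_le_right hQ'.le) _
        have hψ0 : ψ 0 ≤ (Q : ℝ) ^ (1 - r) :=
          rpow_le_rpow_of_nonpos hQ' (le_max_right _ _) (by linarith)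
        linarith

noncomputable def natRpowHom (p : ℝ) (hp : p ≠ 0) : ℕ →*₀ ℝ where
  toFun n := (n : ℝ) ^ p
  map_zero' := by simp [zero_rpow hp]
  map_one' := by simp
  map_mul' m n := by push_cast; exact mul_rpow m.cast_nonneg n.cast_nonneg

theorem natRpowHom_apply (p : ℝ) (hp : p ≠ 0) (n : ℕ) :
    natRpowHom p hp n = (n : ℝ) ^ p := rfl

theorem summable_norm_natRpowHom {p : ℝ} (hp : p < -1) :
    Summable (‖natRpowHom p (by linarith) ·‖) := by
  simpa [natRpowHom_apply, abs_of_nonneg (rpow_nonneg (Nat.cast_nonneg _) _)]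
    using Real.summable_nat_rpow.mpr hp

namespace MonoidWithZeroHom

variable {R : Type*} [MonoidWithZero R]

def restrictCoprime (f : ℕ →*₀ R) (m : ℕ) : ℕ →*₀ R where
  toFun n := if n.Coprime m then f n else 0
  map_zero' := by simp
  map_one' := by simp
  map_mul' a b := by
    simp only [Nat.coprime_mul_iff_left, map_mul]
    split_ifs <;> simp_all

theorem restrictCoprime_apply (f : ℕ →*₀ R) (m n : ℕ) :
    f.restrictCoprime m n = if n.Coprime m then f n else 0 := rfl

theorem restrictCoprime_eq_zero_of_dvd (f : ℕ →*₀ R) {m n d : ℕ} (hd : 1 < d)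
    (hdn : d ∣ n) (hdm : d ∣ m) : f.restrictCoprime m n = 0 := by
  rw [restrictCoprime_apply, if_neg (Nat.not_coprime_of_dvd_of_dvd hd hdn hdm)]

theorem restrictCoprime_natRpowHom_nonneg (p : ℝ) (hp : p ≠ 0) (m n : ℕ) :
    0 ≤ (natRpowHom p hp).restrictCoprime m n := by
  rw [restrictCoprime_apply]
  split_ifs
  exacts [rpow_nonneg n.cast_nonneg _, le_rfl]

theorem restrictCoprime_natRpowHom_le (p : ℝ) (hp : p ≠ 0) (m n : ℕ) :
    (natRpowHom p hp).restrictCoprime m n ≤ (n : ℝ) ^ p := by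
  rw [restrictCoprime_apply]
  split_ifs
  exacts [le_rfl, rpow_nonneg n.cast_nonneg _]

end MonoidWithZeroHom

open MonoidWithZeroHom

section EulerProduct

variable {F : Type*} [NormedField F] [CompleteSpace F]

theorem hasProd_one_sub_inv_primes_not_dvd {f : ℕ →*₀ F} (hsum : Summable (‖f ·‖))
    (m : ℕ) :
    HasProd (fun p : {p : ℕ // p.Prime ∧ ¬ p ∣ m} => (1 - f p)⁻¹)
      (∑' n, f.restrictCoprime m n) := by
  have hsum' : Summable (‖f.restrictCoprime m ·‖) := by
    refine hsum.of_nonneg_of_le (fun _ => norm_nonneg _) fun n => ?_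
    rw [restrictCoprime_apply]
    split_ifs <;> simp
  have h := (hasProd_subtype_iff_mulIndicator (s := {p : ℕ | p.Prime})
    (f := fun n => (1 - f.restrictCoprime m n)⁻¹)).mp
    (EulerProduct.eulerProduct_completely_multiplicative_hasProd hsum')
  have hfactor : {p : ℕ | p.Prime}.mulIndicator (fun n => (1 - f.restrictCoprime m n)⁻¹) =
      {p : ℕ | p.Prime ∧ ¬ p ∣ m}.mulIndicator (fun n => (1 - f n)⁻¹) := by
    funext n
    by_cases hn : n.Prime
    · by_cases hdvd : n ∣ m <;>
        simp [restrictCoprime_apply, hn.coprime_iff_not_dvd, hn, hdvd]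
    · simp [hn]
  rw [hfactor] at h
  exact (hasProd_subtype_iff_mulIndicator (s := {p : ℕ | p.Prime ∧ ¬ p ∣ m})
    (f := fun n => (1 - f n)⁻¹)).mpr h

theorem hasSum_restrictCoprime_of_two_dvd (f : ℕ →*₀ F) {m : ℕ} (hm : 2 ∣ m)
    (hf : Summable (f.restrictCoprime m)) :
    HasSum (f.restrictCoprime m) (1 + ∑' k, f.restrictCoprime m (2 * k + 3)) := by
  have heven : HasSum (fun k => f.restrictCoprime m (2 * k)) 0 := by
    simp [restrictCoprime_eq_zero_of_dvd f one_lt_two (dvd_mul_right 2 _) hm]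
  have hodd : HasSum (fun k => f.restrictCoprime m (2 * k + 1))
      (1 + ∑' k, f.restrictCoprime m (2 * k + 3)) := by
    have h3 : Summable (fun k => f.restrictCoprime m (2 * k + 3)) :=
      hf.comp_injective fun a b hab => by omega
    have h := HasSum.zero_add (f := fun k => f.restrictCoprime m (2 * k + 1)) h3.hasSum
    rwa [mul_zero, zero_add, map_one] at h
  simpa only [zero_add] using heven.even_add_odd hodd

theorem hasProd_one_sub_inv_primes_gt {f : ℕ →*₀ F} (hsum : Summable (‖f ·‖)) (N : ℕ) :
    HasProd (fun p : {p : ℕ // p.Prime ∧ N < p} => (1 - f p)⁻¹)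
      (∑' n, f.restrictCoprime N ! n) := by
  let e : {p : ℕ // p.Prime ∧ ¬ p ∣ N !} ≃ {p : ℕ // p.Prime ∧ N < p} :=
    Equiv.subtypeEquivRight fun p => and_congr_right fun hp => by rw [hp.dvd_factorial, not_le]
  exact e.hasProd_iff.mp (hasProd_one_sub_inv_primes_not_dvd hsum N !)

end EulerProduct

theorem stmt_3_general (r : ℝ) (Q : ℕ) (hQ : Q.Prime) (hQr : (Q : ℝ) < r) :
    IsMighty r Q := by
  have hQ2 : (2 : ℝ) ≤ Q := by exact_mod_cast hQ.two_le
  have hr : 1 < r := by linarith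
  set f := natRpowHom (-r) (by linarith)
  set g := f.restrictCoprime Q !
  have hprod : mightyProd r Q = ∑' n, g n :=
    (hasProd_one_sub_inv_primes_gt (summable_norm_natRpowHom (by linarith)) Q).tprod_eq
  have hsum : HasSum g (1 + ∑' k, g (2 * k + 3)) :=
    hasSum_restrictCoprime_of_two_dvd f (Nat.dvd_factorial two_pos hQ.two_le)
      ((Real.summable_nat_rpow.mpr (by linarith)).of_nonneg_of_le
        (restrictCoprime_natRpowHom_nonneg _ _ _) (restrictCoprime_natRpowHom_le _ _ _))
  have htail : ∑' k, g (2 * k + 3) ≤ (Q : ℝ) ^ (1 - r) / (2 * (r - 1)) := by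
    refine tsum_le_of_le_odd_rpow_neg hr hQ.pos (fun k => restrictCoprime_natRpowHom_nonneg _ _ _ _)
      fun k => ?_
    split_ifs with hk
    · exact restrictCoprime_natRpowHom_le _ _ _ _
    · exact restrictCoprime_eq_zero_of_dvd f (by omega) dvd_rfl
        (Nat.dvd_factorial (by omega) (by omega)) |>.le
  have hlt : (Q : ℝ) ^ (1 - r) / (2 * (r - 1)) < (Q : ℝ) ^ (-r) := by
    rw [sub_eq_add_neg, rpow_add (by linarith), rpow_one, div_lt_iff₀ (by linarith)]
    nlinarith [rpow_pos_of_pos (by linarith : (0 : ℝ) < Q) (-r)]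
  rw [IsMighty, hprod, hsum.tsum_eq]
  linarith

/-- If `Q` is a prime with `Q < r`, then `Q` is `r`-mighty. -/
theorem stmt_3 (r : ℝ) (hr : 1 < r) (Q : ℕ) (hQ : Q.Prime) (hQr : (Q : ℝ) < r) :
    IsMighty r Q :=
  stmt_3_general r Q hQ hQr
end

section
/- Let r > 1 be a real number, let m be a positive integer, let Q = p_m be the m-th prime, and set S := S_{1,m}(r) = ∑_{t=m+1}^∞ p_t^{−r}. Assume S < 1. If S − S²/2 > 1/(Q^r + 1), then Q is not r-mighty. -/
open scoped BigOperators

/-- `S_{1,m}(r) = ∑_{q prime, q > p} q^{-r}`, the sum over all primes greater than `p = p_m`. -/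
noncomputable def S1 (r : ℝ) (p : ℕ) : ℝ :=
  ∑' q : {q : ℕ // q.Prime ∧ p < q}, ((q : ℕ) : ℝ) ^ (-r)

/-!
Taking logarithms, `∏_{q > Q} (1 - q^{-r})⁻¹ = exp (∑_{q > Q} -log (1 - q^{-r})) ≥ exp S`, since
`-log (1 - x) ≥ x`. On the other hand `exp (-S) ≤ 1 - S + S²/2 < 1 - 1/(Q^r + 1)`, which says
exactly that `exp S > 1 + Q^{-r}`.
-/

open Real

lemma exp_tsum_le_tprod_inv_one_sub {ι : Type*} {x : ι → ℝ} (hx : Summable x)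
    (hx1 : ∀ i, x i < 1) : exp (∑' i, x i) ≤ ∏' i, (1 - x i)⁻¹ := by
  have hpos : ∀ i, 0 < (1 - x i)⁻¹ := fun i => inv_pos.mpr (sub_pos.mpr (hx1 i))
  have hlog : ∀ i, log ((1 - x i)⁻¹) = -log (1 + -x i) := fun i => by
    rw [log_inv, sub_eq_add_neg]
  have hsum : Summable fun i => log ((1 - x i)⁻¹) := by
    simpa only [hlog] using (summable_log_one_add_of_summable hx.neg).neg
  have hle : ∀ i, x i ≤ log ((1 - x i)⁻¹) := fun i => by
    rw [log_inv]
    linarith [log_le_sub_one_of_pos (sub_pos.mpr (hx1 i))]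
  rw [← rexp_tsum_eq_tprod hpos hsum]
  exact exp_le_exp.mpr (hx.tsum_le_tsum hle hsum)

lemma summable_rpow_neg_primes_gt {r : ℝ} (hr : 1 < r) (p : ℕ) :
    Summable fun q : {q : ℕ // q.Prime ∧ p < q} => ((q : ℕ) : ℝ) ^ (-r) := by
  have hinj : Function.Injective fun q : {q : ℕ // q.Prime ∧ p < q} => (⟨q, q.2.1⟩ : Nat.Primes) :=
    fun _ _ hab => Subtype.ext (congrArg (Subtype.val : Nat.Primes → ℕ) hab)
  have hprimes : Summable fun q : Nat.Primes => (q : ℝ) ^ (-r) :=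
    Nat.Primes.summable_rpow.mpr (by linarith)
  exact (hprimes.comp_injective hinj).congr fun _ => rfl

lemma exp_S1_le_mightyProd {r : ℝ} (hr : 1 < r) (p : ℕ) : exp (S1 r p) ≤ mightyProd r p :=
  exp_tsum_le_tprod_inv_one_sub (summable_rpow_neg_primes_gt hr p) fun q =>
    rpow_lt_one_of_one_lt_of_neg (by exact_mod_cast q.2.1.one_lt) (by linarith)

lemma exp_neg_le_one_sub_add_sq_div_two {s : ℝ} (hs : 0 ≤ s) : exp (-s) ≤ 1 - s + s ^ 2 / 2 := by
  have hquad := quadratic_le_exp_of_nonneg hs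
  -- `(1 + s + s²/2) (1 - s + s²/2) = 1 + s⁴/4`
  rw [exp_neg, inv_le_iff_one_le_mul₀ (exp_pos s)]
  nlinarith [sq_nonneg (s ^ 2), sq_nonneg (s - 1)]

lemma one_add_inv_lt_exp {s y : ℝ} (hy : 0 ≤ y) (h : 1 / (y + 1) < s - s ^ 2 / 2) :
    1 + y⁻¹ < exp s := by
  -- `s - s²/2 ≤ 1/2` rules out `y = 0`
  have hy0 : 0 < y := hy.lt_of_ne (by rintro rfl; nlinarith [sq_nonneg (s - 1)])
  have hs : 0 ≤ s := by nlinarith [one_div_pos.mpr (by linarith : 0 < y + 1)]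
  have hexp : exp (-s) < y / (y + 1) := by
    calc exp (-s) ≤ 1 - s + s ^ 2 / 2 := exp_neg_le_one_sub_add_sq_div_two hs
      _ < 1 - 1 / (y + 1) := by linarith
      _ = y / (y + 1) := by field_simp; ring
  rw [exp_neg, inv_lt_comm₀ (exp_pos s) (by positivity)] at hexp
  calc 1 + y⁻¹ = (y / (y + 1))⁻¹ := by field_simp
    _ < exp s := hexp

theorem stmt_5_general (r : ℝ) (hr : 1 < r) (Q : ℕ) (S : ℝ) (hS : S = S1 r Q)
    (h : S - S ^ 2 / 2 > 1 / ((Q : ℝ) ^ r + 1)) :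
    ¬ IsMighty r Q := by
  have hexp : 1 + ((Q : ℝ) ^ r)⁻¹ < exp S := one_add_inv_lt_exp (by positivity) h
  rw [IsMighty, rpow_neg (Nat.cast_nonneg Q), not_lt]
  exact hexp.le.trans (hS ▸ exp_S1_le_mightyProd hr Q)

/-- Let `Q = p_m` be prime and `S = S_{1,m}(r) < 1`. If `S - S²/2 > 1/(Q^r + 1)` then `Q`
is not `r`-mighty. -/
theorem stmt_5 (r : ℝ) (hr : 1 < r) (m : ℕ) (hm : 0 < m) (Q : ℕ)
    (hQ : Q = Nat.nth Nat.Prime (m - 1)) (S : ℝ) (hS : S = S1 r Q) (hS1 : S < 1)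
    (h : S - S ^ 2 / 2 > 1 / ((Q : ℝ) ^ r + 1)) :
    ¬ IsMighty r Q :=
  stmt_5_general r hr Q S hS h
end

section
/- Let r > 1 be a real number, suppose at least one prime is r-mighty, and suppose the set of r-mighty primes is finite; let L be the positive integer such that p_L is the largest r-mighty prime. Then the number of connected components of the topological closure of σ_{−r}(ℕ⁺) in ℝ is at most ∏_{i=1}^{L} ⌈ log p_{L+1} / log p_i ⌉. -/
open scoped BigOperators

/-!
Write `M_t = ∏_{k ≥ t} (1 - p_k^{-r})⁻¹` for the tail of the Euler product. Every `n` is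
`∏_{i ≤ L} p_i^{e_i}` times a number `m` free of `p_1, …, p_L`, so
`σ_{-r}(n) = ∏ σ_{-r}(p_i^{e_i}) · σ_{-r}(m)` with `1 ≤ σ_{-r}(m) ≤ M_{L+1}`. Conversely, since
no prime beyond `p_L` is mighty, choosing the exponents of `p_{L+1}, p_{L+2}, …` greedily makes
the values `σ_{-r}(m)` dense in `[1, M_{L+1}]`, so the closure contains `c · [1, M_{L+1}]` for
every `c = ∏ σ_{-r}(p_i^{e_i})`. Once `p_i^{e+1} ≥ p_{L+1}`, consecutive values
`σ_{-r}(p_i^e)` differ by a factor at most `1 + p_{L+1}^{-r} ≤ M_{L+1}`, so the intervals for all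
exponents `e ≥ D_i - 1`, `D_i = ⌈log p_{L+1} / log p_i⌉`, chain into one. Hence the closure is a
union of at most `∏ D_i` intervals that it contains.
-/

open Real Filter Topology Set

-- `𝔭` is 0-indexed: `𝔭 0 = 2`, so the paper's `p_i` is `𝔭 (i - 1)`.
local notation "𝔭" => Nat.nth Nat.Prime

universe u

section General

variable {α : Type*} [LinearOrder α] [TopologicalSpace α] [OrderTopology α]

lemma exists_mem_Ico_of_chain {l u : ℕ → α} {U z : α} (hchain : ∀ a, l (a + 1) ≤ u a)
    (hu : Tendsto u atTop (𝓝 U)) (hz : z ∈ Ico (l 0) U) : ∃ a, z ∈ Ico (l a) (u a) := by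
  classical
  have hex : ∃ a, z < u a := (hu.eventually (eventually_gt_nhds hz.2)).exists
  refine ⟨Nat.find hex, ?_, Nat.find_spec hex⟩
  rcases h : Nat.find hex with _ | a
  · exact hz.1
  · exact (hchain a).trans (not_lt.1 (Nat.find_min hex (by omega)))

lemma Icc_subset_of_chain {K : Set α} (hK : IsClosed K) {l u : ℕ → α} {U : α}
    (hlu : ∀ a, l a ≤ u a) (hchain : ∀ a, l (a + 1) ≤ u a) (hu : Tendsto u atTop (𝓝 U))
    (hsub : ∀ a, Icc (l a) (u a) ⊆ K) : Icc (l 0) U ⊆ K := by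
  intro z hz
  rcases hz.2.lt_or_eq with hlt | rfl
  · obtain ⟨a, ha⟩ := exists_mem_Ico_of_chain hchain hu ⟨hz.1, hlt⟩
    exact hsub a (Ico_subset_Icc_self ha)
  · exact hK.mem_of_tendsto hu (Eventually.of_forall fun a => hsub a ⟨hlu a, le_rfl⟩)

lemma mk_connectedComponents_le {X ι : Type u} [TopologicalSpace X] {s : Set X} (t : ι → Set X)
    (ht : ∀ i, IsPreconnected (t i)) (hts : ∀ i, t i ⊆ s) (hs : s ⊆ ⋃ i, t i) :
    Cardinal.mk (ConnectedComponents s) ≤ Cardinal.mk ι := by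
  choose f hf using fun x : s => mem_iUnion.1 (hs x.2)
  have hsurj := ConnectedComponents.surjective_coe (α := s)
  refine Cardinal.mk_le_of_injective (f := fun c => f (Function.surjInv hsurj c)) fun c c' h => ?_
  have hpre : IsPreconnected ((↑) ⁻¹' t (f (Function.surjInv hsurj c)) : Set s) := by
    rw [← Topology.IsInducing.subtypeVal.isPreconnected_image, Subtype.image_preimage_coe,
      inter_eq_right.2 (hts _)]
    exact ht _
  have := hpre.subset_connectedComponent (hf _) (by simp only at h; rw [h]; exact hf _)
  rw [← Function.surjInv_eq hsurj c, ← Function.surjInv_eq hsurj c']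
  exact (ConnectedComponents.coe_eq_coe'.2 this).symm

lemma rpow_neg_pow_le_of_ceil_le {r p P : ℝ} (hp : 1 < p) (hP : 0 < P) (hr : 0 ≤ r) {e : ℕ}
    (he : ⌈log P / log p⌉₊ ≤ e) : (p ^ (-r)) ^ e ≤ P ^ (-r) := by
  rw [rpow_pow_comm (by linarith)]
  refine rpow_le_rpow_of_nonpos hP ?_ (neg_nonpos.2 hr)
  rw [Nat.ceil_le, div_le_iff₀ (log_pos hp)] at he
  rwa [← log_le_log_iff hP (by positivity), log_pow]

end General

lemma Nat.Prime.dvd_or_eq_of_dvd_mul_pow {p q m a : ℕ} (hp : p.Prime) (hq : q.Prime)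
    (h : p ∣ m * q ^ a) : p ∣ m ∨ p = q :=
  (hp.dvd_mul.1 h).imp_right fun h => (Nat.prime_dvd_prime_iff_eq hp hq).1 (hp.dvd_of_dvd_pow h)

section SigmaNeg

variable {r : ℝ}

lemma sigmaNeg_one : sigmaNeg r 1 = 1 := by simp [sigmaNeg]

lemma one_le_sigmaNeg {n : ℕ} (hn : n ≠ 0) : 1 ≤ sigmaNeg r n := by
  have := Finset.single_le_sum (fun d _ => rpow_nonneg (Nat.cast_nonneg d) (-r))
    (Nat.one_mem_divisors.2 hn)
  simpa [sigmaNeg] using this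

lemma sigmaNeg_mul {m n : ℕ} (h : m.Coprime n) :
    sigmaNeg r (m * n) = sigmaNeg r m * sigmaNeg r n := by
  rw [sigmaNeg, Nat.divisors_mul, Finset.mul_def, Finset.sum_image h.mul_injOn_divisors,
    Finset.sum_product, sigmaNeg, sigmaNeg, Finset.sum_mul_sum]
  refine Finset.sum_congr rfl fun d _ => Finset.sum_congr rfl fun e _ => ?_
  push_cast
  exact mul_rpow (Nat.cast_nonneg d) (Nat.cast_nonneg e)

lemma sigmaNeg_pos {n : ℕ} (hn : n ≠ 0) : 0 < sigmaNeg r n :=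
  zero_lt_one.trans_le (one_le_sigmaNeg hn)

lemma sigmaNeg_mul_prime_pow {m q : ℕ} (hq : q.Prime) (h : ¬ q ∣ m) (a : ℕ) :
    sigmaNeg r (m * q ^ a) = sigmaNeg r m * sigmaNeg r (q ^ a) :=
  sigmaNeg_mul ((hq.coprime_iff_not_dvd.2 h).symm.pow_right a)

lemma sigmaNeg_eq_prod_primeFactors {n : ℕ} (hn : n ≠ 0) :
    sigmaNeg r n = ∏ p ∈ n.primeFactors, sigmaNeg r (p ^ n.factorization p) :=
  Nat.multiplicative_factorization _ (fun _ _ => sigmaNeg_mul) sigmaNeg_one hn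

variable {p : ℕ}

lemma sigmaNeg_prime_pow_s12 (hp : p.Prime) (a : ℕ) :
    sigmaNeg r (p ^ a) = ∑ j ∈ Finset.range (a + 1), ((p : ℝ) ^ (-r)) ^ j := by
  rw [sigmaNeg, Nat.sum_divisors_prime_pow hp]
  refine Finset.sum_congr rfl fun j _ => ?_
  rw [Nat.cast_pow, rpow_pow_comm (Nat.cast_nonneg p)]

lemma sigmaNeg_prime_pow_pos (hp : p.Prime) (a : ℕ) : 0 < sigmaNeg r (p ^ a) :=
  sigmaNeg_pos (pow_ne_zero a hp.ne_zero)

lemma sigmaNeg_prime_pow_succ (hp : p.Prime) (a : ℕ) :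
    sigmaNeg r (p ^ (a + 1)) = sigmaNeg r (p ^ a) + ((p : ℝ) ^ (-r)) ^ (a + 1) := by
  rw [sigmaNeg_prime_pow_s12 hp, sigmaNeg_prime_pow_s12 hp, Finset.sum_range_succ]

lemma sigmaNeg_prime_pow_strictMono (hp : p.Prime) : StrictMono fun a => sigmaNeg r (p ^ a) :=
  strictMono_nat_of_lt_succ fun a => by
    rw [sigmaNeg_prime_pow_succ hp]
    have : (0 : ℝ) < p := by exact_mod_cast hp.pos
    simp only [lt_add_iff_pos_right]
    positivity

lemma sigmaNeg_prime_pow_succ_le_mul (hp : p.Prime) {a : ℕ} {μ : ℝ}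
    (hμ : 1 + ((p : ℝ) ^ (-r)) ^ (a + 1) ≤ μ) :
    sigmaNeg r (p ^ (a + 1)) ≤ sigmaNeg r (p ^ a) * μ := by
  have h1 := one_le_sigmaNeg (r := r) (pow_ne_zero a hp.ne_zero)
  have h2 : (0 : ℝ) ≤ ((p : ℝ) ^ (-r)) ^ (a + 1) := by positivity
  rw [sigmaNeg_prime_pow_succ hp]
  nlinarith

noncomputable def eulerFactor (r : ℝ) (p : ℕ) : ℝ := (1 - (p : ℝ) ^ (-r))⁻¹

lemma rpow_neg_lt_one (hr : 0 < r) (hp : p.Prime) : (p : ℝ) ^ (-r) < 1 :=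
  rpow_lt_one_of_one_lt_of_neg (by exact_mod_cast hp.one_lt) (by linarith)

lemma tendsto_sigmaNeg_prime_pow_s12 (hr : 0 < r) (hp : p.Prime) :
    Tendsto (fun a => sigmaNeg r (p ^ a)) atTop (𝓝 (eulerFactor r p)) := by
  have h := (hasSum_geometric_of_lt_one (by positivity) (rpow_neg_lt_one hr hp)).tendsto_sum_nat
  simp_rw [sigmaNeg_prime_pow_s12 hp]
  exact h.comp (tendsto_add_atTop_nat 1)

lemma sigmaNeg_prime_pow_lt_eulerFactor (hr : 0 < r) (hp : p.Prime) (a : ℕ) :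
    sigmaNeg r (p ^ a) < eulerFactor r p :=
  (sigmaNeg_prime_pow_strictMono hp (Nat.lt_succ_self a)).trans_le <|
    (sigmaNeg_prime_pow_strictMono hp).monotone.ge_of_tendsto (tendsto_sigmaNeg_prime_pow_s12 hr hp) _

lemma one_add_rpow_neg_lt_eulerFactor (hr : 0 < r) (hp : p.Prime) :
    1 + (p : ℝ) ^ (-r) < eulerFactor r p := by
  have h := sigmaNeg_prime_pow_lt_eulerFactor (r := r) hr hp 1
  rwa [sigmaNeg_prime_pow_s12 hp, Finset.sum_range_succ, Finset.sum_range_one, pow_zero, pow_one] at h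

lemma one_lt_eulerFactor (hr : 0 < r) (hp : p.Prime) : 1 < eulerFactor r p := by
  simpa [sigmaNeg_one] using sigmaNeg_prime_pow_lt_eulerFactor hr hp 0

lemma eulerFactor_pos (hr : 0 < r) (hp : p.Prime) : 0 < eulerFactor r p :=
  zero_lt_one.trans (one_lt_eulerFactor hr hp)

end SigmaNeg

section TailProd

variable {r : ℝ}

lemma nthPrime_strictMono : StrictMono 𝔭 := Nat.nth_strictMono Nat.infinite_setOfPred_prime

lemma le_count_prime_of_nthPrime_le {p t : ℕ} (hp : p.Prime) (h : 𝔭 t ≤ p) :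
    t ≤ Nat.count Nat.Prime p :=
  nthPrime_strictMono.le_iff_le.1 (by rwa [Nat.nth_count hp])

lemma summable_rpow_neg_nthPrime (hr : 1 < r) : Summable fun k => ((𝔭 k : ℕ) : ℝ) ^ (-r) :=
  (Nat.Primes.summable_rpow.2 (by linarith)).comp_injective
    (i := fun k => (⟨𝔭 k, Nat.prime_nth_prime k⟩ : Nat.Primes))
    fun _ _ h => nthPrime_strictMono.injective (congrArg Subtype.val h)

lemma summable_log_eulerFactor (hr : 1 < r) : Summable fun k => log (eulerFactor r (𝔭 k)) := by
  simp_rw [eulerFactor, log_inv, sub_eq_add_neg]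
  exact (summable_log_one_add_of_summable (summable_rpow_neg_nthPrime hr).neg).neg

lemma log_eulerFactor_pos (hr : 0 < r) {p : ℕ} (hp : p.Prime) : 0 < log (eulerFactor r p) :=
  log_pos (one_lt_eulerFactor hr hp)

noncomputable def tailProd (r : ℝ) (t : ℕ) : ℝ := ∏' k, eulerFactor r (𝔭 (k + t))

lemma tailProd_eq_exp (hr : 1 < r) (t : ℕ) :
    tailProd r t = exp (∑' k, log (eulerFactor r (𝔭 (k + t)))) :=
  (rexp_tsum_eq_tprod (fun _ => eulerFactor_pos (by linarith) (Nat.prime_nth_prime _))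
    ((summable_nat_add_iff t).2 (summable_log_eulerFactor hr))).symm

lemma tailProd_eq_mul (hr : 1 < r) (t : ℕ) :
    tailProd r t = eulerFactor r (𝔭 t) * tailProd r (t + 1) := by
  rw [tailProd_eq_exp hr, tailProd_eq_exp hr,
    ((summable_nat_add_iff t).2 (summable_log_eulerFactor hr)).tsum_eq_zero_add, exp_add]
  simp only [zero_add, add_assoc, add_comm 1 t]
  rw [exp_log (eulerFactor_pos (by linarith) (Nat.prime_nth_prime t))]

lemma one_le_tailProd (hr : 1 < r) (t : ℕ) : 1 ≤ tailProd r t := by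
  rw [tailProd_eq_exp hr]
  exact one_le_exp (tsum_nonneg fun k => (log_eulerFactor_pos (by linarith)
    (Nat.prime_nth_prime _)).le)

lemma tendsto_tailProd (hr : 1 < r) : Tendsto (tailProd r) atTop (𝓝 1) := by
  have h := (continuous_exp.tendsto 0).comp (tendsto_sum_nat_add fun k => log (eulerFactor r (𝔭 k)))
  rw [exp_zero] at h
  exact h.congr fun t => (tailProd_eq_exp hr t).symm

lemma prod_eulerFactor_le_tailProd (hr : 1 < r) {t : ℕ} {s : Finset ℕ}
    (hs : ∀ p ∈ s, p.Prime ∧ 𝔭 t ≤ p) : ∏ p ∈ s, eulerFactor r p ≤ tailProd r t := by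
  have hpos : ∀ p ∈ s, 0 < eulerFactor r p := fun p hp => eulerFactor_pos (by linarith) (hs p hp).1
  rw [tailProd_eq_exp hr, ← exp_log (Finset.prod_pos hpos), exp_le_exp,
    log_prod fun p hp => (hpos p hp).ne', ← s.tsum_subtype]
  have hcount : ∀ p : s, 𝔭 (Nat.count Nat.Prime p - t + t) = p := fun p => by
    rw [Nat.sub_add_cancel (le_count_prime_of_nthPrime_le (hs p p.2).1 (hs p p.2).2),
      Nat.nth_count (hs p p.2).1]
  refine (s.summable fun p => log (eulerFactor r p)).tsum_le_tsum_of_inj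
    (fun p => Nat.count Nat.Prime p - t) (fun p q h => Subtype.ext ?_)
    (fun k _ => (log_eulerFactor_pos (by linarith) (Nat.prime_nth_prime _)).le)
    (fun p => by rw [hcount]) ((summable_nat_add_iff t).2 (summable_log_eulerFactor hr))
  rw [← hcount p, ← hcount q]
  exact congrArg (fun k => 𝔭 (k + t)) h

lemma mightyProd_nthPrime (t : ℕ) : mightyProd r (𝔭 t) = tailProd r (t + 1) := by
  let e : ℕ ≃ {q : ℕ // q.Prime ∧ 𝔭 t < q} := Equiv.ofBijective
    (fun k => ⟨𝔭 (k + (t + 1)), Nat.prime_nth_prime _, nthPrime_strictMono (by omega)⟩)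
    ⟨fun a b h => by simpa using nthPrime_strictMono.injective (congrArg Subtype.val h),
     fun ⟨q, hq, hlt⟩ => ⟨Nat.count Nat.Prime q - (t + 1), Subtype.ext <| by
      have := (Nat.lt_nth_iff_count_lt Nat.infinite_setOfPred_prime).2 hlt
      simp only
      rw [Nat.sub_add_cancel this, Nat.nth_count hq]⟩⟩
  rw [mightyProd, tailProd, ← e.tprod_eq]
  rfl

lemma not_isMighty_nthPrime_iff {t : ℕ} :
    ¬ IsMighty r (𝔭 t) ↔ 1 + ((𝔭 t : ℕ) : ℝ) ^ (-r) ≤ tailProd r (t + 1) := by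
  rw [IsMighty, mightyProd_nthPrime, gt_iff_lt, not_lt]

end TailProd

section Greedy

variable {r : ℝ} {L : ℕ}

lemma exists_mul_sigmaNeg_pow_mem_Ico (hr : 1 < r) {i : ℕ} (hi : ¬ IsMighty r (𝔭 i)) {c z : ℝ}
    (hc : 0 < c) (hz : z ∈ Ico c (c * tailProd r i)) :
    ∃ a, z ∈ Ico (c * sigmaNeg r (𝔭 i ^ a)) (c * sigmaNeg r (𝔭 i ^ a) * tailProd r (i + 1)) := by
  have hp := Nat.prime_nth_prime i
  refine exists_mem_Ico_of_chain
    (fun a => (mul_le_mul_of_nonneg_left ?_ hc.le).trans_eq (mul_assoc _ _ _).symm)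
    (((tendsto_sigmaNeg_prime_pow_s12 (by linarith) hp).const_mul c).mul_const _) ?_
  · refine sigmaNeg_prime_pow_succ_le_mul hp ((add_le_add_right ?_ 1).trans
      (not_isMighty_nthPrime_iff.1 hi))
    exact pow_le_of_le_one (by positivity) (rpow_neg_lt_one (by linarith) hp).le (by omega)
  · rwa [pow_zero, sigmaNeg_one, mul_one, mul_assoc, ← tailProd_eq_mul hr]

lemma exists_rough_sigmaNeg_mem_Ico (hr : 1 < r) (hL : ∀ t, L ≤ t → ¬ IsMighty r (𝔭 t))
    {t : ℕ} (ht : L ≤ t) {z : ℝ} (hz : z ∈ Ico 1 (tailProd r t)) (k : ℕ) :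
    ∃ m, m ≠ 0 ∧ (∀ p, p.Prime → p ∣ m → 𝔭 t ≤ p ∧ p < 𝔭 (t + k)) ∧
      z ∈ Ico (sigmaNeg r m) (sigmaNeg r m * tailProd r (t + k)) := by
  induction k with
  | zero => exact ⟨1, one_ne_zero, fun p hp h => (hp.not_dvd_one h).elim, by simpa [sigmaNeg_one]⟩
  | succ k ih =>
    obtain ⟨m, hm, hmp, hmz⟩ := ih
    have hq := Nat.prime_nth_prime (t + k)
    have hdvd : ¬ 𝔭 (t + k) ∣ m := fun h => (hmp _ hq h).2.false
    obtain ⟨a, ha⟩ := exists_mul_sigmaNeg_pow_mem_Ico hr (hL _ (by omega)) (sigmaNeg_pos hm) hmz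
    refine ⟨m * 𝔭 (t + k) ^ a, mul_ne_zero hm (pow_ne_zero a hq.ne_zero), fun p hp h => ?_, ?_⟩
    · rcases hp.dvd_or_eq_of_dvd_mul_pow hq h with h | rfl
      · exact ⟨(hmp p hp h).1, (hmp p hp h).2.trans (nthPrime_strictMono (by omega))⟩
      · exact ⟨nthPrime_strictMono.monotone (by omega), nthPrime_strictMono (by omega)⟩
    · rwa [sigmaNeg_mul_prime_pow hq hdvd, ← add_assoc]

lemma Icc_one_tailProd_subset_closure (hr : 1 < r) (hL : ∀ t, L ≤ t → ¬ IsMighty r (𝔭 t))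
    {t : ℕ} (ht : L ≤ t) :
    Icc 1 (tailProd r t) ⊆
      closure (sigmaNeg r '' {m | m ≠ 0 ∧ ∀ p, p.Prime → p ∣ m → 𝔭 t ≤ p}) := by
  have hIco : Ico 1 (tailProd r t) ⊆
      closure (sigmaNeg r '' {m | m ≠ 0 ∧ ∀ p, p.Prime → p ∣ m → 𝔭 t ≤ p}) := by
    intro z hz
    choose m hm hmp hmz using exists_rough_sigmaNeg_mem_Ico hr hL ht hz
    have hM : Tendsto (fun k => tailProd r (t + k)) atTop (𝓝 1) :=
      (tendsto_tailProd hr).comp ((tendsto_add_atTop_nat t).congr fun k => add_comm k t)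
    have hlim : Tendsto (fun k => sigmaNeg r (m k)) atTop (𝓝 z) := by
      refine tendsto_of_tendsto_of_tendsto_of_le_of_le
        (by simpa using tendsto_const_nhds.div hM one_ne_zero) tendsto_const_nhds (fun k => ?_)
        fun k => (hmz k).1
      exact (div_le_iff₀ (zero_lt_one.trans_le (one_le_tailProd hr _))).2 (hmz k).2.le
    exact mem_closure_of_tendsto hlim (Eventually.of_forall fun k =>
      ⟨m k, ⟨hm k, fun p hp h => (hmp k p hp h).1⟩, rfl⟩)
  intro z hz
  rcases hz.2.lt_or_eq with h | rfl
  · exact hIco ⟨hz.1, h⟩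
  rcases (one_le_tailProd hr t).lt_or_eq with h1 | h1
  · exact closure_minimal hIco isClosed_closure (by rw [closure_Ico h1.ne]; exact ⟨h1.le, le_rfl⟩)
  · exact subset_closure ⟨1, ⟨one_ne_zero, fun p hp h => (hp.not_dvd_one h).elim⟩,
      by rw [sigmaNeg_one, h1]⟩

end Greedy

section Blocks

variable {r : ℝ} {L : ℕ}

noncomputable def expBound (L i : ℕ) : ℕ := ⌈log (𝔭 L) / log (𝔭 i)⌉₊

lemma one_le_expBound (L i : ℕ) : 1 ≤ expBound L i :=
  Nat.one_le_iff_ne_zero.2 (Nat.ceil_pos.2 (div_pos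
    (log_pos (by exact_mod_cast (Nat.prime_nth_prime L).one_lt))
    (log_pos (by exact_mod_cast (Nat.prime_nth_prime i).one_lt)))).ne'

lemma eulerFactor_le_tailProd (hr : 1 < r) (t : ℕ) : eulerFactor r (𝔭 t) ≤ tailProd r t := by
  rw [tailProd_eq_mul hr]
  exact le_mul_of_one_le_right (eulerFactor_pos (by linarith) (Nat.prime_nth_prime t)).le
    (one_le_tailProd hr _)

lemma sigmaNeg_nthPrime_pow_succ_le (hr : 1 < r) {i a : ℕ} (ha : expBound L i ≤ a + 1) :
    sigmaNeg r (𝔭 i ^ (a + 1)) ≤ sigmaNeg r (𝔭 i ^ a) * tailProd r L := by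
  refine sigmaNeg_prime_pow_succ_le_mul (Nat.prime_nth_prime i) ((add_le_add_right
    (rpow_neg_pow_le_of_ceil_le (by exact_mod_cast (Nat.prime_nth_prime i).one_lt)
      (by exact_mod_cast (Nat.prime_nth_prime L).pos) (by linarith) ha) 1).trans ?_)
  exact (one_add_rpow_neg_lt_eulerFactor (by linarith) (Nat.prime_nth_prime L)).le.trans
    (eulerFactor_le_tailProd hr L)

noncomputable def capFactor (r : ℝ) (L i b : ℕ) : ℝ :=
  if expBound L i ≤ b + 1 then eulerFactor r (𝔭 i) else sigmaNeg r (𝔭 i ^ b)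

lemma sigmaNeg_le_capFactor (hr : 0 < r) (i b : ℕ) :
    sigmaNeg r (𝔭 i ^ b) ≤ capFactor r L i b := by
  unfold capFactor
  split_ifs
  · exact (sigmaNeg_prime_pow_lt_eulerFactor hr (Nat.prime_nth_prime i) b).le
  · exact le_rfl

lemma Icc_sigmaNeg_mul_tailProd_subset_closure (hr : 1 < r) (hL : ∀ t, L ≤ t → ¬ IsMighty r (𝔭 t))
    {m : ℕ} (hm : m ≠ 0) (hmp : ∀ p, p.Prime → p ∣ m → p < 𝔭 L) :
    Icc (sigmaNeg r m) (sigmaNeg r m * tailProd r L) ⊆ closure (sigmaSet r) :=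
  calc Icc (sigmaNeg r m) (sigmaNeg r m * tailProd r L)
      = (sigmaNeg r m * ·) '' Icc 1 (tailProd r L) := by
        rw [image_mul_left_Icc' (sigmaNeg_pos hm), mul_one]
    _ ⊆ (sigmaNeg r m * ·) ''
          closure (sigmaNeg r '' {m | m ≠ 0 ∧ ∀ p, p.Prime → p ∣ m → 𝔭 L ≤ p}) :=
        image_mono (Icc_one_tailProd_subset_closure hr hL le_rfl)
    _ ⊆ closure ((sigmaNeg r m * ·) ''
          (sigmaNeg r '' {m | m ≠ 0 ∧ ∀ p, p.Prime → p ∣ m → 𝔭 L ≤ p})) :=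
        image_closure_subset_closure_image (continuous_const_mul _)
    _ ⊆ closure (sigmaSet r) := by
        refine closure_mono ?_
        rintro _ ⟨_, ⟨n, ⟨hn, hnp⟩, rfl⟩, rfl⟩
        refine ⟨m * n, Nat.pos_of_ne_zero (mul_ne_zero hm hn), (sigmaNeg_mul ?_).symm⟩
        exact Nat.coprime_of_dvd fun p hp hpm hpn => (hmp p hp hpm).not_ge (hnp p hp hpn)

lemma Icc_sigmaNeg_mul_prod_subset_closure (hr : 1 < r) (hL : ∀ t, L ≤ t → ¬ IsMighty r (𝔭 t))
    (b : Fin L → ℕ) (s : Finset (Fin L)) {m : ℕ} (hm : m ≠ 0)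
    (hmp : ∀ p, p.Prime → p ∣ m → p < 𝔭 L ∧ ∀ i ∈ s, p ≠ 𝔭 i) :
    Icc (sigmaNeg r m * ∏ i ∈ s, sigmaNeg r (𝔭 i ^ b i))
      (sigmaNeg r m * (∏ i ∈ s, capFactor r L i (b i)) * tailProd r L) ⊆
      closure (sigmaSet r) := by
  induction s using Finset.induction_on generalizing m with
  | empty =>
    simpa using Icc_sigmaNeg_mul_tailProd_subset_closure hr hL hm fun p hp h => (hmp p hp h).1
  | @insert j s hj ih =>
    have hq := Nat.prime_nth_prime j
    have hjm : ¬ 𝔭 j ∣ m := fun h => (hmp _ hq h).2 j (Finset.mem_insert_self j s) rfl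
    set R := ∏ i ∈ s, sigmaNeg r (𝔭 i ^ b i)
    set C := ∏ i ∈ s, capFactor r L i (b i)
    have hIH : ∀ a, Icc (sigmaNeg r m * sigmaNeg r (𝔭 j ^ a) * R)
        (sigmaNeg r m * sigmaNeg r (𝔭 j ^ a) * C * tailProd r L) ⊆ closure (sigmaSet r) := by
      intro a
      rw [← sigmaNeg_mul_prime_pow hq hjm]
      refine ih (mul_ne_zero hm (pow_ne_zero a hq.ne_zero)) fun p hp h => ?_
      rcases hp.dvd_or_eq_of_dvd_mul_pow hq h with h | rfl
      · exact ⟨(hmp p hp h).1, fun i hi => (hmp p hp h).2 i (Finset.mem_insert_of_mem hi)⟩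
      · exact ⟨nthPrime_strictMono j.2,
          fun i hi he => hj (Fin.ext (nthPrime_strictMono.injective he) ▸ hi)⟩
    rw [Finset.prod_insert hj, Finset.prod_insert hj, ← mul_assoc, ← mul_assoc, capFactor]
    split_ifs with hfree
    · have hσm := sigmaNeg_pos (r := r) hm
      have hσ := sigmaNeg_prime_pow_pos (r := r) hq
      have hR : 0 ≤ R :=
        Finset.prod_nonneg fun i _ => (sigmaNeg_prime_pow_pos (Nat.prime_nth_prime _) _).le
      have hRC : R ≤ C :=
        Finset.prod_le_prod (fun i _ => (sigmaNeg_prime_pow_pos (Nat.prime_nth_prime _) _).le)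
          fun i _ => sigmaNeg_le_capFactor (by linarith) _ _
      have hM := one_le_tailProd hr L
      refine Icc_subset_of_chain isClosed_closure
        (l := fun a => sigmaNeg r m * sigmaNeg r (𝔭 j ^ (b j + a)) * R)
        (u := fun a => sigmaNeg r m * sigmaNeg r (𝔭 j ^ (b j + a)) * C * tailProd r L)
        (fun a => ?_) (fun a => ?_) ?_ fun a => hIH _
      · exact (mul_le_mul_of_nonneg_left hRC (mul_pos hσm (hσ _)).le).trans
          (le_mul_of_one_le_right (mul_nonneg (mul_pos hσm (hσ _)).le (hR.trans hRC)) hM)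
      · calc sigmaNeg r m * sigmaNeg r (𝔭 j ^ (b j + a + 1)) * R
            ≤ sigmaNeg r m * (sigmaNeg r (𝔭 j ^ (b j + a)) * tailProd r L) * C :=
              mul_le_mul (mul_le_mul_of_nonneg_left
                (sigmaNeg_nthPrime_pow_succ_le hr (by omega)) hσm.le) hRC hR
                (mul_nonneg hσm.le (mul_nonneg (hσ _).le (zero_le_one.trans hM)))
          _ = _ := by ring
      · exact (((((tendsto_sigmaNeg_prime_pow_s12 (by linarith) hq).comp
          ((tendsto_add_atTop_nat (b j)).congr fun a => add_comm a (b j))).const_mul _).mul_const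
          C).mul_const _)
    · exact hIH (b j)

end Blocks

section Cover

variable {r : ℝ} {L : ℕ}

noncomputable def blockInterval (r : ℝ) (L : ℕ) (b : Fin L → ℕ) : Set ℝ :=
  Icc (∏ i : Fin L, sigmaNeg r (𝔭 i ^ b i)) ((∏ i : Fin L, capFactor r L i (b i)) * tailProd r L)

lemma isClosed_blockInterval (b : Fin L → ℕ) : IsClosed (blockInterval r L b) := isClosed_Icc

lemma isPreconnected_blockInterval (b : Fin L → ℕ) : IsPreconnected (blockInterval r L b) :=
  isPreconnected_Icc

lemma blockInterval_subset_closure (hr : 1 < r) (hL : ∀ t, L ≤ t → ¬ IsMighty r (𝔭 t))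
    (b : Fin L → ℕ) : blockInterval r L b ⊆ closure (sigmaSet r) := by
  simpa [blockInterval, sigmaNeg_one] using
    Icc_sigmaNeg_mul_prod_subset_closure hr hL b Finset.univ one_ne_zero fun p hp h =>
      (hp.not_dvd_one h).elim

lemma sigmaNeg_eq_prod_mul_prod {n : ℕ} (hn : n ≠ 0) :
    sigmaNeg r n = (∏ i : Fin L, sigmaNeg r (𝔭 i ^ n.factorization (𝔭 i))) *
      ∏ p ∈ n.primeFactors with 𝔭 L ≤ p, sigmaNeg r (p ^ n.factorization p) := by
  rw [sigmaNeg_eq_prod_primeFactors hn,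
    ← Finset.prod_filter_mul_prod_filter_not n.primeFactors (· < 𝔭 L)]
  simp only [not_lt]
  congr 1
  rw [Fin.prod_univ_eq_prod_range (fun i => sigmaNeg r (𝔭 i ^ n.factorization (𝔭 i))),
    ← Finset.prod_image (f := fun p => sigmaNeg r (p ^ n.factorization p))
      fun i _ j _ h => nthPrime_strictMono.injective h]
  refine Finset.prod_subset (fun p hp => ?_) fun p hp hpn => ?_
  · obtain ⟨hpn, hlt⟩ := Finset.mem_filter.1 hp
    have hpp := Nat.prime_of_mem_primeFactors hpn
    exact Finset.mem_image.2 ⟨Nat.count Nat.Prime p, Finset.mem_range.2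
      (nthPrime_strictMono.lt_iff_lt.1 (by rwa [Nat.nth_count hpp])), Nat.nth_count hpp⟩
  · obtain ⟨i, hi, rfl⟩ := Finset.mem_image.1 hp
    have : 𝔭 i ∉ n.primeFactors := fun h =>
      hpn (Finset.mem_filter.2 ⟨h, nthPrime_strictMono (Finset.mem_range.1 hi)⟩)
    rw [Finsupp.notMem_support_iff.1 (by rwa [Nat.support_factorization]), pow_zero, sigmaNeg_one]

lemma sigmaNeg_le_capFactor_min (hr : 0 < r) (i e : ℕ) :
    sigmaNeg r (𝔭 i ^ e) ≤ capFactor r L i (min e (expBound L i - 1)) := by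
  unfold capFactor
  split_ifs with h
  · exact (sigmaNeg_prime_pow_lt_eulerFactor hr (Nat.prime_nth_prime i) e).le
  · rw [min_eq_left (by omega)]

lemma exists_sigmaNeg_mem_blockInterval (hr : 1 < r) {n : ℕ} (hn : n ≠ 0) :
    ∃ b : Fin L → ℕ, (∀ i, b i < expBound L i) ∧ sigmaNeg r n ∈ blockInterval r L b := by
  have hσ : ∀ (i : Fin L) a, 0 < sigmaNeg r (𝔭 i ^ a) :=
    fun i => sigmaNeg_prime_pow_pos (Nat.prime_nth_prime i)
  set Y := ∏ p ∈ n.primeFactors with 𝔭 L ≤ p, sigmaNeg r (p ^ n.factorization p)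
  have hprime : ∀ p ∈ n.primeFactors.filter (𝔭 L ≤ ·), p.Prime := fun p hp =>
    Nat.prime_of_mem_primeFactors (Finset.mem_filter.1 hp).1
  have hYM : Y ≤ tailProd r L :=
    (Finset.prod_le_prod (fun p hp => (sigmaNeg_prime_pow_pos (hprime p hp) _).le) fun p hp =>
      (sigmaNeg_prime_pow_lt_eulerFactor (by linarith) (hprime p hp) _).le).trans
      (prod_eulerFactor_le_tailProd hr fun p hp => ⟨hprime p hp, (Finset.mem_filter.1 hp).2⟩)
  have hY1 : 1 ≤ Y :=
    Finset.one_le_prod fun p hp => one_le_sigmaNeg (pow_ne_zero _ (hprime p hp).ne_zero)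
  refine ⟨fun i => min (n.factorization (𝔭 i)) (expBound L i - 1),
    fun i => (min_le_right _ _).trans_lt (Nat.sub_lt (one_le_expBound L i) one_pos), ?_, ?_⟩ <;>
    beta_reduce <;> rw [sigmaNeg_eq_prod_mul_prod (L := L) hn]
  · exact (Finset.prod_le_prod (fun i _ => (hσ i _).le) fun i _ =>
      (sigmaNeg_prime_pow_strictMono (Nat.prime_nth_prime _)).monotone (min_le_left _ _)).trans
      (le_mul_of_one_le_right (Finset.prod_nonneg fun i _ => (hσ i _).le) hY1)
  · exact mul_le_mul (Finset.prod_le_prod (fun i _ => (hσ i _).le)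
      fun i _ => sigmaNeg_le_capFactor_min (by linarith) _ _) hYM (zero_le_one.trans hY1)
      (Finset.prod_nonneg fun i _ => ((hσ i _).trans_le
        (sigmaNeg_le_capFactor (by linarith) _ _)).le)

end Cover

theorem stmt_12_general (r : ℝ) (hr : 1 < r) (L : ℕ) (hL : 0 < L)
    (hlargest : ∀ q : ℕ, q.Prime → Nat.nth Nat.Prime (L - 1) < q → ¬ IsMighty r q) :
    Cardinal.mk (ConnectedComponents ↥(closure (sigmaSet r))) ≤
      ((∏ i ∈ Finset.range L,
        ⌈Real.log (Nat.nth Nat.Prime L : ℝ) / Real.log (Nat.nth Nat.Prime i : ℝ)⌉₊ : ℕ) :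
        Cardinal) := by
  have hnotMighty : ∀ t, L ≤ t → ¬ IsMighty r (𝔭 t) := fun t ht =>
    hlargest _ (Nat.prime_nth_prime t) (nthPrime_strictMono (by omega))
  have hcover : closure (sigmaSet r) ⊆
      ⋃ b : (i : Fin L) → Fin (expBound L i), blockInterval r L fun i => b i := by
    refine closure_minimal ?_ (isClosed_iUnion_of_finite fun _ => isClosed_blockInterval _)
    rintro _ ⟨n, hn, rfl⟩
    obtain ⟨b, hb, hmem⟩ := exists_sigmaNeg_mem_blockInterval hr (L := L) hn.ne'
    exact mem_iUnion.2 ⟨fun i => ⟨b i, hb i⟩, hmem⟩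
  calc Cardinal.mk (ConnectedComponents (closure (sigmaSet r)))
      ≤ Cardinal.mk ((i : Fin L) → Fin (expBound L i)) :=
        mk_connectedComponents_le _ (fun _ => isPreconnected_blockInterval _)
          (fun _ => blockInterval_subset_closure hr hnotMighty _) hcover
    _ = _ := by
      rw [Cardinal.mk_fintype, Fintype.card_pi]
      simp only [Fintype.card_fin]
      rw [Fin.prod_univ_eq_prod_range (fun i => expBound L i)]
      rfl

/-- If `p_L` is the largest `r`-mighty prime (`L ≥ 1`, `p_i` being the `i`-th prime,
1-indexed), then the number of connected components of the closure of `σ_{-r}(ℕ⁺)` is at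
most `∏_{i=1}^{L} ⌈log p_{L+1} / log p_i⌉`. Here `Nat.nth Nat.Prime` is 0-indexed, so the
`i`-th prime (1-indexed) is `Nat.nth Nat.Prime (i - 1)`. -/
theorem stmt_12 (r : ℝ) (hr : 1 < r) (L : ℕ) (hL : 0 < L)
    (hmighty : IsMighty r (Nat.nth Nat.Prime (L - 1)))
    (hlargest : ∀ q : ℕ, q.Prime → Nat.nth Nat.Prime (L - 1) < q → ¬ IsMighty r q) :
    Cardinal.mk (ConnectedComponents ↥(closure (sigmaSet r))) ≤
      ((∏ i ∈ Finset.range L,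
        ⌈Real.log (Nat.nth Nat.Prime L : ℝ) / Real.log (Nat.nth Nat.Prime i : ℝ)⌉₊ : ℕ) :
        Cardinal) :=
  stmt_12_general r hr L hL hlargest
end

section
/- For every prime p there exists a real number r_p > 1 such that for every real s > 1, p is s-mighty if and only if s > r_p. In particular, if p is r-mighty and s > r > 1, then p is s-mighty, and every prime p is s-mighty for all sufficiently large s. -/
open scoped BigOperators

/-!
Taking logarithms and multiplying by `p ^ s`, the prime `p` is `s`-mighty iff
`∑_{q > p} p ^ s * log (1 - q ^ (-s))⁻¹ < p ^ s * log (1 + p ^ (-s))`.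
With `φ u = log (1 + u) / u`, which is strictly decreasing on `(-1, ∞)` because `log` is strictly
concave, the right side is `φ (p ^ (-s))` and the `q`-th term on the left is
`(p / q) ^ s * φ (-q ^ (-s))`; so the left side strictly decreases and the right side strictly
increases with `s`. Near `s = 1` the left side exceeds `1`, an upper bound of the right side,
because `∑ 1 / q` diverges; as `s → ∞` the left side tends to `0` while the right side stays
above `log 2`. By continuity the two sides cross at a single exponent `r_p`.
-/

open Real Set Filter Topology

lemma log_one_add_div_self_strictAntiOn :
    StrictAntiOn (fun u : ℝ => log (1 + u) / u) (Ioi (-1) \ {0}) := by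
  rintro u ⟨hu, hu0⟩ v ⟨hv, hv0⟩ huv
  have := strictConcaveOn_log_Ioi.secant_strict_mono (a := 1) (x := 1 + u) (y := 1 + v)
    (mem_Ioi.2 one_pos) (mem_Ioi.2 (by linarith [mem_Ioi.1 hu]))
    (mem_Ioi.2 (by linarith [mem_Ioi.1 hv])) (by simpa using hu0) (by simpa using hv0) (by linarith)
  simpa using this

lemma one_le_log_one_add_div_self {u : ℝ} (hu : -1 < u) (hu0 : u < 0) :
    1 ≤ log (1 + u) / u := by
  rw [one_le_div_of_neg hu0]
  linarith [log_le_sub_one_of_pos (show 0 < 1 + u by linarith)]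

lemma log_one_add_div_self_le_one {u : ℝ} (hu : 0 < u) : log (1 + u) / u ≤ 1 := by
  rw [div_le_one hu]
  linarith [log_le_sub_one_of_pos (show 0 < 1 + u by linarith)]

lemma rpow_mul_log_one_add_rpow_neg {p : ℝ} (hp : 0 < p) (s : ℝ) :
    p ^ s * log (1 + p ^ (-s)) = log (1 + p ^ (-s)) / p ^ (-s) := by
  rw [rpow_neg hp.le, div_inv_eq_mul, mul_comm]

lemma rpow_mul_log_one_add_rpow_neg_strictMono {p : ℝ} (hp : 1 < p) :
    StrictMono fun s : ℝ => p ^ s * log (1 + p ^ (-s)) := by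
  intro s t hst
  have hp0 : 0 < p := zero_lt_one.trans hp
  have hmem (r : ℝ) : p ^ (-r) ∈ Ioi (-1) \ {0} :=
    ⟨mem_Ioi.2 (by linarith [rpow_pos_of_pos hp0 (-r)]), (rpow_pos_of_pos hp0 _).ne'⟩
  simp only [rpow_mul_log_one_add_rpow_neg hp0]
  exact log_one_add_div_self_strictAntiOn (hmem t) (hmem s)
    (rpow_lt_rpow_of_exponent_lt hp (neg_lt_neg hst))

lemma rpow_mul_log_one_add_rpow_neg_le_one {p : ℝ} (hp : 0 < p) (s : ℝ) :
    p ^ s * log (1 + p ^ (-s)) ≤ 1 := by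
  rw [rpow_mul_log_one_add_rpow_neg hp]
  exact log_one_add_div_self_le_one (rpow_pos_of_pos hp _)

noncomputable def eulerLogTerm (p q s : ℝ) : ℝ := p ^ s * -log (1 - q ^ (-s))

section eulerLogTerm

variable {p q : ℝ}

lemma eulerLogTerm_eq (hp : 0 ≤ p) (hq : 0 < q) (s : ℝ) :
    eulerLogTerm p q s = (p / q) ^ s * (log (1 + -q ^ (-s)) / -q ^ (-s)) := by
  have : q ^ s ≠ 0 := (rpow_pos_of_pos hq s).ne'
  rw [eulerLogTerm, div_rpow hp hq.le, rpow_neg hq.le, ← sub_eq_add_neg]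
  field_simp

lemma neg_rpow_neg_mem_Ioo (hq : 1 < q) {s : ℝ} (hs : 0 < s) : -q ^ (-s) ∈ Ioo (-1) 0 :=
  ⟨by linarith [rpow_lt_one_of_one_lt_of_neg hq (neg_lt_zero.2 hs)],
    by linarith [rpow_pos_of_pos (zero_lt_one.trans hq) (-s)]⟩

lemma rpow_div_le_eulerLogTerm (hp : 0 ≤ p) (hq : 1 < q) {s : ℝ} (hs : 0 < s) :
    (p / q) ^ s ≤ eulerLogTerm p q s := by
  obtain ⟨h1, h0⟩ := neg_rpow_neg_mem_Ioo hq hs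
  rw [eulerLogTerm_eq hp (zero_lt_one.trans hq)]
  exact le_mul_of_one_le_right (by positivity) (one_le_log_one_add_div_self h1 h0)

lemma eulerLogTerm_nonneg (hp : 0 ≤ p) (hq : 1 < q) {s : ℝ} (hs : 0 < s) :
    0 ≤ eulerLogTerm p q s :=
  (by positivity : (0 : ℝ) ≤ (p / q) ^ s).trans (rpow_div_le_eulerLogTerm hp hq hs)

lemma eulerLogTerm_strictAntiOn (hp : 0 < p) (hpq : p ≤ q) (hq : 1 < q) :
    StrictAntiOn (eulerLogTerm p q) (Ioi 0) := by
  intro s hs t ht hst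
  obtain ⟨hs1, hs0⟩ := neg_rpow_neg_mem_Ioo hq hs
  obtain ⟨ht1, ht0⟩ := neg_rpow_neg_mem_Ioo hq ht
  have hq0 : 0 < q := zero_lt_one.trans hq
  rw [eulerLogTerm_eq hp.le hq0, eulerLogTerm_eq hp.le hq0]
  refine mul_lt_mul' ?_ ?_ ?_ (by positivity)
  · exact rpow_le_rpow_of_exponent_ge (by positivity) ((div_le_one hq0).2 hpq) hst.le
  · refine log_one_add_div_self_strictAntiOn ⟨hs1, hs0.ne⟩ ⟨ht1, ht0.ne⟩ ?_
    simpa using rpow_lt_rpow_of_exponent_lt hq (neg_lt_neg hst)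
  · exact zero_le_one.trans (one_le_log_one_add_div_self ht1 ht0)

lemma tendsto_eulerLogTerm_atTop (hp : 0 ≤ p) (hpq : p < q) (hq : 1 < q) :
    Tendsto (eulerLogTerm p q) atTop (𝓝 0) := by
  have hq0 : 0 < q := zero_lt_one.trans hq
  obtain ⟨h1, h0⟩ := neg_rpow_neg_mem_Ioo hq one_pos
  have hlim : Tendsto (fun s : ℝ => (p / q) ^ s * (log (1 + -q ^ (-1 : ℝ)) / -q ^ (-1 : ℝ)))
      atTop (𝓝 0) := by
    have hpq0 : 0 ≤ p / q := div_nonneg hp hq0.le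
    simpa using (tendsto_rpow_atTop_of_base_lt_one (p / q) (by linarith)
      ((div_lt_one hq0).2 hpq)).mul_const (log (1 + -q ^ (-1 : ℝ)) / -q ^ (-1 : ℝ))
  refine tendsto_of_tendsto_of_tendsto_of_le_of_le' tendsto_const_nhds hlim
    (eventually_gt_atTop 0 |>.mono fun s hs => eulerLogTerm_nonneg hp hq hs)
    (eventually_ge_atTop 1 |>.mono fun s hs => ?_)
  obtain ⟨hs1, hs0⟩ := neg_rpow_neg_mem_Ioo hq (zero_lt_one.trans_le hs)
  rw [eulerLogTerm_eq hp hq0]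
  refine mul_le_mul_of_nonneg_left ?_ (by positivity)
  refine log_one_add_div_self_strictAntiOn.antitoneOn ⟨h1, h0.ne⟩ ⟨hs1, hs0.ne⟩ ?_
  simpa using rpow_le_rpow_of_exponent_le hq.le (neg_le_neg hs)

lemma continuousOn_eulerLogTerm (hp : 0 < p) (hq : 1 < q) :
    ContinuousOn (eulerLogTerm p q) (Ioi 0) := by
  intro s hs
  have hne : 1 - q ^ (-s) ≠ 0 :=
    (by linarith [(neg_rpow_neg_mem_Ioo hq hs).1] : (0 : ℝ) < 1 - q ^ (-s)).ne'
  unfold eulerLogTerm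
  fun_prop (disch := first | exact hne | positivity)

end eulerLogTerm

lemma exists_mem_Icc_forall_lt_iff_of_strictAntiOn {α β : Type*}
    [ConditionallyCompleteLinearOrder α] [TopologicalSpace α] [OrderTopology α]
    [DenselyOrdered α]
    [LinearOrder β] [TopologicalSpace β] [OrderClosedTopology β]
    {f : α → β} {S : Set α} {a b : α} {y : β} (hf : StrictAntiOn f S) (hab : a ≤ b)
    (hS : Icc a b ⊆ S) (hcont : ContinuousOn f (Icc a b)) (ha : y < f a) (hb : f b < y) :
    ∃ r ∈ Icc a b, ∀ s ∈ S, f s < y ↔ r < s := by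
  obtain ⟨r, hr, rfl⟩ := intermediate_value_Icc' hab hcont ⟨hb.le, ha.le⟩
  exact ⟨r, hr, fun s hs => hf.lt_iff_gt hs (hS hr)⟩

abbrev LargerPrimes (p : ℕ) := {q : ℕ // q.Prime ∧ p < q}

namespace LargerPrimes

variable {p : ℕ}

lemma one_lt_coe (q : LargerPrimes p) : 1 < ((q : ℕ) : ℝ) := by exact_mod_cast q.2.1.one_lt

lemma lt_coe (q : LargerPrimes p) : (p : ℝ) < (q : ℕ) := by exact_mod_cast q.2.2

lemma summable_rpow_neg (p : ℕ) {s : ℝ} (hs : 1 < s) :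
    Summable fun q : LargerPrimes p => ((q : ℕ) : ℝ) ^ (-s) :=
  (summable_nat_rpow.2 (by linarith)).comp_injective Subtype.val_injective

lemma summable_neg_log_one_sub_rpow_neg (p : ℕ) {s : ℝ} (hs : 1 < s) :
    Summable fun q : LargerPrimes p => -log (1 - ((q : ℕ) : ℝ) ^ (-s)) := by
  simpa [sub_eq_add_neg] using (summable_log_one_add_of_summable (summable_rpow_neg p hs).neg).neg

lemma summable_eulerLogTerm (p : ℕ) {s : ℝ} (hs : 1 < s) :
    Summable fun q : LargerPrimes p => eulerLogTerm p (q : ℕ) s :=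
  (summable_neg_log_one_sub_rpow_neg p hs).mul_left _

lemma not_summable_div {c : ℝ} (hc : c ≠ 0) :
    ¬ Summable fun q : LargerPrimes p => c / (q : ℕ) := by
  intro h
  apply not_summable_one_div_on_primes
  have h' : Summable ({q : ℕ | q.Prime ∧ p < q}.indicator fun n : ℕ => (1 : ℝ) / n) := by
    have h1 : Summable fun q : LargerPrimes p => (1 : ℝ) / (q : ℕ) := by
      simpa [inv_mul_cancel_left₀ hc, div_eq_mul_inv] using h.mul_left c⁻¹
    exact summable_subtype_iff_indicator.1 h1
  rw [← summable_nat_add_iff (p + 1)] at h' ⊢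
  refine h'.congr fun n => ?_
  simp only [indicator_apply, mem_ofPred_eq, show p < n + (p + 1) by omega, and_true]

end LargerPrimes

noncomputable def mightyLogTail (p : ℕ) (s : ℝ) : ℝ :=
  ∑' q : LargerPrimes p, eulerLogTerm p (q : ℕ) s

noncomputable def mightyGap (p : ℕ) (s : ℝ) : ℝ :=
  mightyLogTail p s - (p : ℝ) ^ s * log (1 + (p : ℝ) ^ (-s))

section mighty

variable {p : ℕ}

lemma mightyProd_eq_exp {s : ℝ} (hs : 1 < s) :
    mightyProd s p = exp (∑' q : LargerPrimes p, -log (1 - ((q : ℕ) : ℝ) ^ (-s))) := by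
  have hpos (q : LargerPrimes p) : 0 < 1 - ((q : ℕ) : ℝ) ^ (-s) := by
    linarith [rpow_lt_one_of_one_lt_of_neg q.one_lt_coe (by linarith : -s < 0)]
  rw [mightyProd, ← rexp_tsum_eq_tprod (fun q => inv_pos.2 (hpos q))]
  · simp only [log_inv]
  · simpa only [log_inv] using LargerPrimes.summable_neg_log_one_sub_rpow_neg p hs

lemma isMighty_iff_mightyGap_neg (hp : 0 < p) {s : ℝ} (hs : 1 < s) :
    IsMighty s p ↔ mightyGap p s < 0 := by
  have hps : 0 < (p : ℝ) ^ s := rpow_pos_of_pos (by exact_mod_cast hp) s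
  have hpos : 0 < 1 + (p : ℝ) ^ (-s) := by positivity
  rw [IsMighty, mightyGap, sub_neg, mightyLogTail, mightyProd_eq_exp hs, gt_iff_lt,
    ← lt_log_iff_exp_lt hpos, ← mul_lt_mul_iff_right₀ hps, ← tsum_mul_left]
  rfl

lemma mightyLogTail_strictAntiOn (hp : 0 < p) : StrictAntiOn (mightyLogTail p) (Ioi 1) := by
  intro s hs t ht hst
  have hanti (q : LargerPrimes p) : eulerLogTerm p (q : ℕ) t < eulerLogTerm p (q : ℕ) s :=
    eulerLogTerm_strictAntiOn (by exact_mod_cast hp) q.lt_coe.le q.one_lt_coe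
      (Ioi_subset_Ioi zero_le_one hs) (Ioi_subset_Ioi zero_le_one ht) hst
  obtain ⟨q, hpq, hq⟩ := Nat.exists_infinite_primes (p + 1)
  exact Summable.tsum_lt_tsum (fun q => (hanti q).le) (hanti ⟨q, hq, hpq⟩)
    (LargerPrimes.summable_eulerLogTerm p ht) (LargerPrimes.summable_eulerLogTerm p hs)

lemma mightyGap_strictAntiOn (hp : 1 < p) : StrictAntiOn (mightyGap p) (Ioi 1) :=
  fun s hs t ht hst => sub_lt_sub (mightyLogTail_strictAntiOn (zero_lt_one.trans hp) hs ht hst)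
    (rpow_mul_log_one_add_rpow_neg_strictMono (by exact_mod_cast hp) hst)

lemma continuousOn_mightyLogTail (hp : 0 < p) {s₁ : ℝ} (hs₁ : 1 < s₁) :
    ContinuousOn (mightyLogTail p) (Ici s₁) := by
  have hp' : (0 : ℝ) < p := by exact_mod_cast hp
  refine continuousOn_tsum (fun q => (continuousOn_eulerLogTerm hp' q.one_lt_coe).mono ?_)
    (LargerPrimes.summable_eulerLogTerm p hs₁) fun q s hs => ?_
  · exact Ici_subset_Ioi.2 (zero_lt_one.trans hs₁)
  · have hs0 : 0 < s := zero_lt_one.trans (hs₁.trans_le hs)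
    rw [Real.norm_of_nonneg (eulerLogTerm_nonneg hp'.le q.one_lt_coe hs0)]
    exact (eulerLogTerm_strictAntiOn hp' q.lt_coe.le q.one_lt_coe).antitoneOn
      (zero_lt_one.trans hs₁) hs0 hs

lemma continuousOn_mightyGap (hp : 0 < p) {s₁ : ℝ} (hs₁ : 1 < s₁) :
    ContinuousOn (mightyGap p) (Ici s₁) := by
  have hp' : (p : ℝ) ≠ 0 := by exact_mod_cast hp.ne'
  refine (continuousOn_mightyLogTail hp hs₁).sub (Continuous.continuousOn ?_)
  have hne (s : ℝ) : 1 + (p : ℝ) ^ (-s) ≠ 0 := by positivity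
  fun_prop (disch := assumption)

lemma exists_one_lt_mightyLogTail (hp : 0 < p) : ∃ a, 1 < a ∧ 1 < mightyLogTail p a := by
  by_contra! h
  have hp' : (0 : ℝ) < p := by exact_mod_cast hp
  refine LargerPrimes.not_summable_div (p := p) hp'.ne'
    (summable_of_sum_le (c := 1) (fun q => by positivity) fun F => ?_)
  have hcont : Continuous fun a : ℝ => ∑ q ∈ F, ((p : ℝ) / (q : ℕ)) ^ a :=
    continuous_finsetSum F fun q _ => by
      have : (p : ℝ) / (q : ℕ) ≠ 0 := div_ne_zero hp'.ne' (zero_lt_one.trans q.one_lt_coe).ne'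
      fun_prop (disch := assumption)
  have hlim := (hcont.continuousWithinAt (s := Ioi 1) (x := 1)).tendsto
  refine le_of_tendsto (by simpa using hlim) ?_
  filter_upwards [self_mem_nhdsWithin] with a (ha : 1 < a)
  calc ∑ q ∈ F, ((p : ℝ) / (q : ℕ)) ^ a ≤ ∑ q ∈ F, eulerLogTerm p (q : ℕ) a :=
        Finset.sum_le_sum fun q _ =>
          rpow_div_le_eulerLogTerm hp'.le q.one_lt_coe (zero_lt_one.trans ha)
    _ ≤ mightyLogTail p a := (LargerPrimes.summable_eulerLogTerm p ha).sum_le_tsum F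
        fun q _ => eulerLogTerm_nonneg hp'.le q.one_lt_coe (zero_lt_one.trans ha)
    _ ≤ 1 := h a ha

lemma exists_mightyGap_pos (hp : 0 < p) : ∃ a, 1 < a ∧ 0 < mightyGap p a := by
  obtain ⟨a, ha, htail⟩ := exists_one_lt_mightyLogTail hp
  have hhead := rpow_mul_log_one_add_rpow_neg_le_one (p := p) (by exact_mod_cast hp) a
  exact ⟨a, ha, sub_pos.2 (hhead.trans_lt htail)⟩

lemma tendsto_mightyLogTail_atTop (hp : 0 < p) : Tendsto (mightyLogTail p) atTop (𝓝 0) := by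
  have hp' : (0 : ℝ) < p := by exact_mod_cast hp
  have h := tendsto_tsum_of_dominated_convergence (𝓕 := atTop)
    (f := fun s (q : LargerPrimes p) => eulerLogTerm p (q : ℕ) s)
    (LargerPrimes.summable_eulerLogTerm p one_lt_two)
    (fun q => tendsto_eulerLogTerm_atTop hp'.le q.lt_coe q.one_lt_coe) ?_
  · rwa [tsum_zero] at h
  filter_upwards [eventually_ge_atTop 2] with s hs q
  have hs0 : (0 : ℝ) < s := by linarith
  rw [Real.norm_of_nonneg (eulerLogTerm_nonneg hp'.le q.one_lt_coe hs0)]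
  exact (eulerLogTerm_strictAntiOn hp' q.lt_coe.le q.one_lt_coe).antitoneOn
    (mem_Ioi.2 two_pos) hs0 hs

lemma eventually_mightyGap_neg (hp : 1 < p) : ∀ᶠ s in atTop, mightyGap p s < 0 := by
  have hp' : (1 : ℝ) < p := by exact_mod_cast hp
  have hlog2 : 0 < log 2 := log_pos one_lt_two
  filter_upwards [(tendsto_mightyLogTail_atTop (zero_lt_one.trans hp)).eventually_lt_const hlog2,
    eventually_ge_atTop 0] with s htail hs
  have hhead : log 2 ≤ (p : ℝ) ^ s * log (1 + (p : ℝ) ^ (-s)) := by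
    simpa [one_add_one_eq_two] using (rpow_mul_log_one_add_rpow_neg_strictMono hp').monotone hs
  rw [mightyGap]
  linarith

end mighty

/-- For every prime `p` there is `r_p > 1` such that for all `s > 1`, `p` is `s`-mighty iff
`s > r_p`. In particular mightiness is upward closed in the exponent, and every prime is
`s`-mighty for all sufficiently large `s`. -/
theorem stmt_15 (p : ℕ) (hp : p.Prime) :
    (∃ rp : ℝ, 1 < rp ∧ ∀ s : ℝ, 1 < s → (IsMighty s p ↔ rp < s)) ∧
    (∀ r s : ℝ, 1 < r → r < s → IsMighty r p → IsMighty s p) ∧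
    (∃ s₀ : ℝ, ∀ s : ℝ, s₀ ≤ s → IsMighty s p) := by
  obtain ⟨a, ha, hgap_a⟩ := exists_mightyGap_pos hp.pos
  obtain ⟨b, hgap_b, hab⟩ :=
    ((eventually_mightyGap_neg hp.one_lt).and (eventually_ge_atTop a)).exists
  obtain ⟨rp, hrp, hthreshold⟩ := exists_mem_Icc_forall_lt_iff_of_strictAntiOn
    (mightyGap_strictAntiOn hp.one_lt) hab (Icc_subset_Ioi_iff hab |>.2 ha)
    ((continuousOn_mightyGap hp.pos ha).mono Icc_subset_Ici_self) hgap_a hgap_b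
  have hrp1 : 1 < rp := ha.trans_le hrp.1
  have hmighty (s : ℝ) (hs : 1 < s) : IsMighty s p ↔ rp < s :=
    (isMighty_iff_mightyGap_neg hp.pos hs).trans (hthreshold s hs)
  refine ⟨⟨rp, hrp1, hmighty⟩, fun r s hr hrs hm => ?_, ⟨rp + 1, fun s hs => ?_⟩⟩
  · exact (hmighty s (hr.trans hrs)).2 (((hmighty r hr).1 hm).trans hrs)
  · exact (hmighty s (by linarith)).2 (by linarith)
end
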